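/- Let P be a locally finite partially ordered set with a weak rank function r, and let κ be a P-kernel in the incidence algebra of P with coefficients in the polynomial ring ℤ[t]. Then there exists a unique element g ∈ 𝓘_{1/2}(P) such that \bar g = g * κ; that is, g x x = 1 for all x, for x < y either g x y = 0 or 2·deg(g x y) < r x y, and for all x ≤ y one has t^{r x y}·(g x y)(t^{-1}) = Σ_{x ≤ z ≤ y} (g x z)·(κ z y). (The element g is the left Kazhdan–Lusztig–Stanley function associated with κ.) -/

import Mathlib

open Finset Polynomial

/-- The bar involution on the incidence algebra of `P` over `ℤ[t]` relative to a weak rank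
function `r`: it sends `f` to the function `x y ↦ t^(r x y) · (f x y)(t⁻¹)`, i.e. the
reflection of `f x y` at degree `r x y`. -/
noncomputable def IncidenceAlgebra.bar {P : Type*} [PartialOrder P] [LocallyFiniteOrder P]
    (r : P → P → ℕ) (f : IncidenceAlgebra (Polynomial ℤ) P) :
    IncidenceAlgebra (Polynomial ℤ) P :=
  ⟨fun x y => (f x y).reflect (r x y), fun x y h => by
    try simp only []
    rw [IncidenceAlgebra.apply_eq_zero_of_not_le h, Polynomial.reflect_zero]⟩

/-!
Fix `x` and argue by strong induction on the interval `[x, y]`. With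
`Q = ∑_{x ≤ z < y} g x z * κ z y` and `N = r x y`, the equation `ḡ = g * κ` at `(x, y)` reads
`t^N g(t⁻¹) = g + Q`. As `2 deg g < N`, the left side has no terms of degree below `N / 2`, so `g`
must be minus the part of `Q` in those degrees: this gives uniqueness and a recursive definition.
The remaining degrees are consistent because `Q` is antisymmetric, `t^N Q(t⁻¹) = -Q`, which
follows from the induction hypothesis and `κ * κ̄ = 1`; the latter is the bar of `κ̄ * κ = 1`.
-/

namespace Polynomial

variable {R : Type*}

lemma reflect_sum [Semiring R] {ι : Type*} (s : Finset ι) (f : ι → R[X]) (N : ℕ) :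
    (∑ i ∈ s, f i).reflect N = ∑ i ∈ s, (f i).reflect N := by
  ext j
  simp only [coeff_reflect, finsetSum_coeff]

lemma coeff_eq_zero_of_two_mul_natDegree_lt [Semiring R] {N j : ℕ} {g : R[X]}
    (hg : g = 0 ∨ 2 * g.natDegree < N) (hj : N ≤ 2 * j) : g.coeff j = 0 := by
  rcases hg with rfl | hg
  · rfl
  · exact coeff_eq_zero_of_natDegree_lt (by omega)

/-- The part of `Q` in the degrees `j` with `2 * j < N`. -/
noncomputable def lowHalf [Semiring R] (N : ℕ) (Q : R[X]) : R[X] :=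
  ∑ j ∈ range ((N + 1) / 2), monomial j (Q.coeff j)

lemma coeff_lowHalf [Semiring R] (N : ℕ) (Q : R[X]) (j : ℕ) :
    (lowHalf N Q).coeff j = if 2 * j < N then Q.coeff j else 0 := by
  have hj : j ∈ range ((N + 1) / 2) ↔ 2 * j < N := by rw [mem_range]; omega
  simp [lowHalf, finsetSum_coeff, coeff_monomial, hj]

lemma lowHalf_eq_zero_or_two_mul_natDegree_lt [Semiring R] (N : ℕ) (Q : R[X]) :
    lowHalf N Q = 0 ∨ 2 * (lowHalf N Q).natDegree < N := by
  refine or_iff_not_imp_left.2 fun h => ?_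
  by_contra! hN
  apply leadingCoeff_ne_zero.2 h
  rw [leadingCoeff, coeff_lowHalf, if_neg (by omega)]

lemma eq_neg_lowHalf_of_reflect_eq_add [Ring R] {N : ℕ} {g Q : R[X]}
    (hg : g = 0 ∨ 2 * g.natDegree < N) (h : g.reflect N = g + Q) : g = -lowHalf N Q := by
  ext j
  rw [coeff_neg, coeff_lowHalf]
  split_ifs with hj
  · have hj' := congrArg (coeff · j) h
    simp only [coeff_reflect, revAt_le (by omega : j ≤ N), coeff_add,
      coeff_eq_zero_of_two_mul_natDegree_lt hg (by omega : N ≤ 2 * (N - j))] at hj'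
    exact eq_neg_of_add_eq_zero_left hj'.symm
  · rw [neg_zero]
    exact coeff_eq_zero_of_two_mul_natDegree_lt hg (by omega)

/-- Since `Q` is antisymmetric under `reflect N`, its coefficients in degrees `j` with
`2 * j ≥ N` are determined by those in the low half, and its middle coefficient vanishes. -/
lemma reflect_neg_lowHalf [Ring R] [IsAddTorsionFree R] {N : ℕ} {Q : R[X]}
    (hdeg : Q.natDegree ≤ N) (hQ : Q.reflect N = -Q) :
    (-lowHalf N Q).reflect N = -lowHalf N Q + Q := by
  have hanti : ∀ j ≤ N, Q.coeff (N - j) = -Q.coeff j := fun j hj => by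
    simpa [coeff_reflect, revAt_le hj] using congrArg (coeff · j) hQ
  ext j
  rw [reflect_neg, coeff_add, coeff_neg, coeff_neg, coeff_reflect]
  rcases le_or_gt j N with hjN | hNj
  · rw [revAt_le hjN, coeff_lowHalf, coeff_lowHalf]
    rcases lt_trichotomy (2 * j) N with hj | hj | hj
    · rw [if_neg (by omega), if_pos hj, neg_zero, neg_add_cancel]
    · have hmid : Q.coeff j = 0 := by
        rw [← self_eq_neg, ← hanti j hjN, show N - j = j by omega]
      rw [if_neg (by omega), if_neg (by omega), hmid, neg_zero, add_zero]
    · rw [if_pos (by omega), if_neg hj.not_gt, hanti j hjN, neg_neg, neg_zero, zero_add]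
  · rw [revAt_eq_self_of_lt hNj, coeff_lowHalf, if_neg (by omega),
      coeff_eq_zero_of_natDegree_lt (hdeg.trans_lt hNj), neg_zero, add_zero]

end Polynomial

section Induction

variable {P : Type*} [PartialOrder P] [LocallyFiniteOrder P]

lemma Finset.card_Icc_lt_card_Icc_of_mem_Ico {x y z : P} (hz : z ∈ Ico x y) :
    #(Icc x z) < #(Icc x y) :=
  card_lt_card <| Icc_ssubset_Icc_right ((mem_Ico.1 hz).1.trans (mem_Ico.1 hz).2.le) le_rfl
    (mem_Ico.1 hz).2

theorem Finset.strongInductionOn_Ico {x : P} {p : P → Prop}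
    (ih : ∀ y, x ≤ y → (∀ z ∈ Ico x y, p z) → p y) (y : P) (hxy : x ≤ y) : p y :=
  ih y hxy fun z hz => strongInductionOn_Ico ih z (mem_Ico.1 hz).1
termination_by #(Icc x y)
decreasing_by exact card_Icc_lt_card_Icc_of_mem_Ico hz

end Induction

namespace IncidenceAlgebra

variable {P : Type*} [PartialOrder P] {r : P → P → ℕ}

/-- The additivity axiom of a weak rank function. -/
def IsRankAdditive (r : P → P → ℕ) : Prop :=
  ∀ x y z : P, x ≤ y → y ≤ z → r x y + r y z = r x z

lemma IsRankAdditive.self_eq_zero (hr : IsRankAdditive r) (x : P) : r x x = 0 := by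
  have := hr x x x le_rfl le_rfl
  omega

def DegreeLE (r : P → P → ℕ) (f : IncidenceAlgebra ℤ[X] P) : Prop :=
  ∀ x y : P, x ≤ y → (f x y).natDegree ≤ r x y

lemma degreeLE_of_half {g : IncidenceAlgebra ℤ[X] P} (hdiag : ∀ x, g x x = 1)
    (hhalf : ∀ x y, x < y → g x y = 0 ∨ 2 * (g x y).natDegree < r x y) : DegreeLE r g := by
  intro x y hxy
  obtain rfl | hxy := hxy.eq_or_lt
  · simp [hdiag]
  · obtain h | h := hhalf x y hxy
    · simp [h]
    · omega

variable [LocallyFiniteOrder P]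

lemma mul_apply_eq_sum_Ico_add {𝕜 : Type*} [AddCommMonoid 𝕜] [Mul 𝕜]
    (f g : IncidenceAlgebra 𝕜 P) {x y : P} (hxy : x ≤ y) :
    (f * g) x y = ∑ z ∈ Ico x y, f x z * g z y + f x y * g y y := by
  rw [mul_apply, sum_Ico_add_eq_sum_Icc hxy]

@[simp]
lemma bar_apply (f : IncidenceAlgebra ℤ[X] P) (x y : P) :
    bar r f x y = (f x y).reflect (r x y) :=
  rfl

@[simp]
lemma bar_bar (f : IncidenceAlgebra ℤ[X] P) : bar r (bar r f) = f := by
  ext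
  simp

lemma DegreeLE.bar {f : IncidenceAlgebra ℤ[X] P} (hf : DegreeLE r f) : DegreeLE r (bar r f) :=
  fun x y hxy => natDegree_reflect_le.trans (max_le le_rfl (hf x y hxy))

lemma reflect_mul_apply (hr : IsRankAdditive r) {f g : IncidenceAlgebra ℤ[X] P}
    (hf : DegreeLE r f) (hg : DegreeLE r g) {x y z : P} (hxz : x ≤ z) (hzy : z ≤ y) :
    (f x z * g z y).reflect (r x y) = bar r f x z * bar r g z y := by
  rw [← hr x z y hxz hzy]
  exact reflect_mul _ _ (hf x z hxz) (hg z y hzy)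

lemma bar_mul (hr : IsRankAdditive r) {f g : IncidenceAlgebra ℤ[X] P}
    (hf : DegreeLE r f) (hg : DegreeLE r g) : bar r (f * g) = bar r f * bar r g := by
  refine ext fun x y _ => ?_
  rw [bar_apply, IncidenceAlgebra.mul_apply, IncidenceAlgebra.mul_apply, Polynomial.reflect_sum]
  refine Finset.sum_congr rfl fun z hz => ?_
  exact reflect_mul_apply hr hf hg (mem_Icc.1 hz).1 (mem_Icc.1 hz).2

lemma natDegree_sum_Ico_mul_le (hr : IsRankAdditive r) {f g : IncidenceAlgebra ℤ[X] P}
    (hf : DegreeLE r f) (hg : DegreeLE r g) (x y : P) :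
    (∑ z ∈ Ico x y, f x z * g z y).natDegree ≤ r x y := by
  refine natDegree_sum_le_of_forall_le _ _ fun z hz => ?_
  obtain ⟨hxz, hzy⟩ := mem_Ico.1 hz
  rw [← hr x z y hxz hzy.le]
  exact natDegree_mul_le.trans (add_le_add (hf x z hxz) (hg z y hzy.le))

/-- `g ∈ 𝓘_{1/2}(P)` and `ḡ = g * κ`. -/
def IsLeftKLS (r : P → P → ℕ) (κ g : IncidenceAlgebra ℤ[X] P) : Prop :=
  (∀ x, g x x = 1) ∧ (∀ x y, x < y → g x y = 0 ∨ 2 * (g x y).natDegree < r x y) ∧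
    ∀ x y, x ≤ y → bar r g x y = (g * κ) x y

lemma IsLeftKLS.apply_eq_neg_lowHalf {κ g : IncidenceAlgebra ℤ[X] P} (hκ_diag : ∀ x, κ x x = 1)
    (hg : IsLeftKLS r κ g) {x y : P} (hxy : x < y) :
    g x y = -lowHalf (r x y) (∑ z ∈ Ico x y, g x z * κ z y) :=
  eq_neg_lowHalf_of_reflect_eq_add (hg.2.1 x y hxy) <| by
    rw [← bar_apply, hg.2.2 x y hxy.le, mul_apply_eq_sum_Ico_add _ _ hxy.le, hκ_diag, mul_one,
      add_comm]

lemma IsLeftKLS.unique {κ g g' : IncidenceAlgebra ℤ[X] P} (hκ_diag : ∀ x, κ x x = 1)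
    (hg : IsLeftKLS r κ g) (hg' : IsLeftKLS r κ g') : g = g' := by
  refine ext fun x => strongInductionOn_Ico fun y hxy ih => ?_
  obtain rfl | hxy := hxy.eq_or_lt
  · rw [hg.1, hg'.1]
  · rw [hg.apply_eq_neg_lowHalf hκ_diag hxy, hg'.apply_eq_neg_lowHalf hκ_diag hxy,
      Finset.sum_congr rfl fun z hz => by rw [ih z hz]]

variable [DecidableEq P]

lemma bar_one (hr : IsRankAdditive r) : bar r (1 : IncidenceAlgebra ℤ[X] P) = 1 := by
  ext x y -
  by_cases h : x = y
  · subst h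
    simp [hr.self_eq_zero]
  · simp [h]

lemma mul_bar_eq_one (hr : IsRankAdditive r) {κ : IncidenceAlgebra ℤ[X] P}
    (hκ : DegreeLE r κ) (hκ_kernel : bar r κ * κ = 1) : κ * bar r κ = 1 := by
  simpa [bar_mul hr hκ.bar hκ, bar_one hr] using congrArg (bar r) hκ_kernel

/-- For the sum `Q`, `Q̄ = (g * κ * κ̄) x y - (g * κ) x y = g x y - (g x y + Q)`. -/
lemma reflect_sum_Ico_mul_eq_neg (hr : IsRankAdditive r) {κ g : IncidenceAlgebra ℤ[X] P}
    (hκ : DegreeLE r κ) (hκ_diag : ∀ x, κ x x = 1) (hκ_right : κ * bar r κ = 1)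
    (hg : DegreeLE r g) {x y : P} (hxy : x < y)
    (ih : ∀ z ∈ Ico x y, bar r g x z = (g * κ) x z) :
    (∑ z ∈ Ico x y, g x z * κ z y).reflect (r x y) = -∑ z ∈ Ico x y, g x z * κ z y := by
  have hbar_κ : bar r κ y y = 1 := by simp [hr.self_eq_zero, hκ_diag]
  calc (∑ z ∈ Ico x y, g x z * κ z y).reflect (r x y)
      = ∑ z ∈ Ico x y, (g * κ) x z * bar r κ z y := by
        rw [Polynomial.reflect_sum]
        refine Finset.sum_congr rfl fun z hz => ?_
        rw [reflect_mul_apply hr hg hκ (mem_Ico.1 hz).1 (mem_Ico.1 hz).2.le, ih z hz]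
    _ = (g * κ * bar r κ) x y - (g * κ) x y * bar r κ y y := by
        rw [mul_apply_eq_sum_Ico_add _ _ hxy.le, add_sub_cancel_right]
    _ = -∑ z ∈ Ico x y, g x z * κ z y := by
        rw [mul_assoc, hκ_right, mul_one, hbar_κ, mul_one, mul_apply_eq_sum_Ico_add _ _ hxy.le,
          hκ_diag, mul_one]
        abel

/-- The recursion forced by `Polynomial.eq_neg_lowHalf_of_reflect_eq_add`. -/
noncomputable def leftKLSFun (r : P → P → ℕ) (κ : IncidenceAlgebra ℤ[X] P) : P → P → ℤ[X]
  | x, y =>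
    if x = y then 1
    else -lowHalf (r x y) (∑ z ∈ (Ico x y).attach, leftKLSFun r κ x z * κ z y)
termination_by x y => #(Icc x y)
decreasing_by exact card_Icc_lt_card_Icc_of_mem_Ico z.2

lemma leftKLSFun_of_ne (κ : IncidenceAlgebra ℤ[X] P) {x y : P} (h : x ≠ y) :
    leftKLSFun r κ x y = -lowHalf (r x y) (∑ z ∈ Ico x y, leftKLSFun r κ x z * κ z y) := by
  rw [leftKLSFun, if_neg h, sum_attach (Ico x y) fun z => leftKLSFun r κ x z * κ z y]

noncomputable def leftKLS (r : P → P → ℕ) (κ : IncidenceAlgebra ℤ[X] P) :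
    IncidenceAlgebra ℤ[X] P :=
  ⟨leftKLSFun r κ, fun x y h => by
    simp [leftKLSFun_of_ne κ (ne_of_not_le h), Ico_eq_empty (mt le_of_lt h), lowHalf]⟩

lemma leftKLS_apply_self (κ : IncidenceAlgebra ℤ[X] P) (x : P) : leftKLS r κ x x = 1 := by
  simp [leftKLS, leftKLSFun]

lemma leftKLS_apply_of_lt (κ : IncidenceAlgebra ℤ[X] P) {x y : P} (hxy : x < y) :
    leftKLS r κ x y = -lowHalf (r x y) (∑ z ∈ Ico x y, leftKLS r κ x z * κ z y) :=
  leftKLSFun_of_ne κ hxy.ne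

lemma isLeftKLS_leftKLS (hr : IsRankAdditive r) {κ : IncidenceAlgebra ℤ[X] P}
    (hκ : DegreeLE r κ) (hκ_diag : ∀ x, κ x x = 1) (hκ_kernel : bar r κ * κ = 1) :
    IsLeftKLS r κ (leftKLS r κ) := by
  have hhalf : ∀ x y, x < y →
      leftKLS r κ x y = 0 ∨ 2 * (leftKLS r κ x y).natDegree < r x y := fun x y hxy => by
    rw [leftKLS_apply_of_lt κ hxy]
    simpa using lowHalf_eq_zero_or_two_mul_natDegree_lt _ _
  have hdeg := degreeLE_of_half (leftKLS_apply_self κ) hhalf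
  refine ⟨leftKLS_apply_self κ, hhalf, fun x => strongInductionOn_Ico fun y hxy ih => ?_⟩
  obtain rfl | hxy := hxy.eq_or_lt
  · simp [leftKLS_apply_self, hr.self_eq_zero, hκ_diag]
  · rw [bar_apply, mul_apply_eq_sum_Ico_add _ _ hxy.le, hκ_diag, mul_one,
      leftKLS_apply_of_lt κ hxy, add_comm]
    exact reflect_neg_lowHalf (natDegree_sum_Ico_mul_le hr hdeg hκ x y)
      (reflect_sum_Ico_mul_eq_neg hr hκ hκ_diag (mul_bar_eq_one hr hκ hκ_kernel) hdeg hxy ih)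

end IncidenceAlgebra

theorem existsUnique_left_KLS_function_general {P : Type*} [PartialOrder P] [LocallyFiniteOrder P]
    [DecidableEq P] (r : P → P → ℕ)
    (hr_add : ∀ x y z : P, x ≤ y → y ≤ z → r x y + r y z = r x z)
    (κ : IncidenceAlgebra (Polynomial ℤ) P)
    (hκ_deg : ∀ x y : P, x ≤ y → (κ x y).natDegree ≤ r x y)
    (hκ_diag : ∀ x : P, κ x x = 1)
    (hκ_kernel : IncidenceAlgebra.bar r κ * κ = 1) :
    ∃! g : IncidenceAlgebra (Polynomial ℤ) P,
      (∀ x : P, g x x = 1) ∧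
      (∀ x y : P, x < y → g x y = 0 ∨ 2 * (g x y).natDegree < r x y) ∧
      ∀ x y : P, x ≤ y →
        (g x y).reflect (r x y) = ∑ z ∈ Finset.Icc x y, g x z * κ z y := by
  have hκ_left : IncidenceAlgebra.IsLeftKLS r κ (IncidenceAlgebra.leftKLS r κ) :=
    IncidenceAlgebra.isLeftKLS_leftKLS hr_add hκ_deg hκ_diag hκ_kernel
  exact ⟨_, hκ_left, fun g hg => IncidenceAlgebra.IsLeftKLS.unique hκ_diag hg hκ_left⟩

/-- Given a locally finite poset `P` with a weak rank function `r` and a `P`-kernel `κ` in the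
incidence algebra of `P` over `ℤ[t]`, there is a unique `g ∈ 𝓘_{1/2}(P)` with `ḡ = g * κ`:
the left Kazhdan–Lusztig–Stanley function associated with `κ`. -/
theorem existsUnique_left_KLS_function {P : Type*} [PartialOrder P] [LocallyFiniteOrder P]
    [DecidableEq P] (r : P → P → ℕ)
    (hr_pos : ∀ x y : P, x < y → 0 < r x y)
    (hr_add : ∀ x y z : P, x ≤ y → y ≤ z → r x y + r y z = r x z)
    (κ : IncidenceAlgebra (Polynomial ℤ) P)
    (hκ_deg : ∀ x y : P, x ≤ y → (κ x y).natDegree ≤ r x y)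
    (hκ_diag : ∀ x : P, κ x x = 1)
    (hκ_kernel : IncidenceAlgebra.bar r κ * κ = 1) :
    ∃! g : IncidenceAlgebra (Polynomial ℤ) P,
      (∀ x : P, g x x = 1) ∧
      (∀ x y : P, x < y → g x y = 0 ∨ 2 * (g x y).natDegree < r x y) ∧
      ∀ x y : P, x ≤ y →
        (g x y).reflect (r x y) = ∑ z ∈ Finset.Icc x y, g x z * κ z y :=
  existsUnique_left_KLS_function_general r hr_add κ hκ_deg hκ_diag hκ_kernel
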